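/- arXiv:math/0104113 — 2 statements merged into one kernel-verified Lean document; each statement's English description precedes it below -/
import Mathlib

section
/- Let p ≤ n and let x_{ij}, 1 ≤ i ≤ n, 1 ≤ j ≤ p, be i.i.d. real random variables whose common distribution is symmetric and has all moments finite; let X be the n×p matrix with entries x_{ij} and A_p = XᵀX. Let M_n = (y_{ij}) be an n×n real symmetric random matrix whose entries y_{ij} = y_{ji} for i ≤ j are i.i.d. with the same distribution as x_{11}. Then for every positive integer m, E[Trace(A_p^{m})] ≤ E[Trace(M_n^{2m})]. -/
/-!
Expanding the traces over closed walks, `E Tr (XᵀX)^m` and `E Tr M^(2m) = E Tr (MᵀM)^m` become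
sums, over pairs of index tuples `(c, d)`, of products `∏ ∫ x^e dν` in which an entry visited
`e` times by the walk contributes its `e`-th moment. Embedding the column indices of `X` into
those of `M` (`p ≤ n`) sends each `X`-walk to an `M`-walk in which distinct entries of `X` may
become the same entry `y_ij = y_ji` of `M`. As `ν` is symmetric, its odd moments vanish, all its
moments `m_a = ∫ x^a dν` are nonnegative, and `m_a m_b ≤ m_(a+b)` for even `a, b` (Chebyshev's
integral inequality); so merging entries can only increase a term, and the `M`-walks that are not
hit contribute nonnegatively.
-/

open MeasureTheory ProbabilityTheory Matrix Finset

section Moments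

variable {ν : Measure ℝ}

theorem integral_pow_eq_zero_of_map_neg_eq (hν : ν.map (fun x => -x) = ν) {k : ℕ} (hk : Odd k) :
    ∫ x, x ^ k ∂ν = 0 := by
  have h : ∫ x, x ^ k ∂ν = ∫ x, (-x) ^ k ∂ν := by
    conv_lhs => rw [← hν]
    rw [integral_map (by fun_prop) (by fun_prop)]
  simp only [hk.neg_pow, integral_neg] at h
  linarith

theorem integral_pow_nonneg_of_map_neg_eq (hν : ν.map (fun x => -x) = ν) (k : ℕ) :
    0 ≤ ∫ x, x ^ k ∂ν := by
  rcases Nat.even_or_odd k with hk | hk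
  · exact integral_nonneg fun x => hk.pow_nonneg x
  · rw [integral_pow_eq_zero_of_map_neg_eq hν hk]

theorem integral_mul_integral_le_integral_mul_of_monovary {α : Type*} [MeasurableSpace α]
    {μ : Measure α} [IsProbabilityMeasure μ] {f g : α → ℝ} (hf : Integrable f μ)
    (hg : Integrable g μ) (hfg : Integrable (fun x => f x * g x) μ) (h : Monovary f g) :
    (∫ x, f x ∂μ) * ∫ x, g x ∂μ ≤ ∫ x, f x * g x ∂μ := by
  have hdiag : Integrable (fun z : α × α => f z.2 * g z.2 + f z.1 * g z.1) (μ.prod μ) :=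
    (hfg.comp_snd μ).add (hfg.comp_fst μ)
  have hcross : Integrable (fun z : α × α => f z.1 * g z.2 + g z.1 * f z.2) (μ.prod μ) :=
    (hf.mul_prod hg).add (hg.mul_prod hf)
  have hpos : 0 ≤ ∫ z, (f z.2 - f z.1) * (g z.2 - g z.1) ∂μ.prod μ :=
    integral_nonneg fun z => h.sub_mul_sub_nonneg z.1 z.2
  have hring (z : α × α) : (f z.2 - f z.1) * (g z.2 - g z.1)
      = (f z.2 * g z.2 + f z.1 * g z.1) - (f z.1 * g z.2 + g z.1 * f z.2) := by
    ring
  rw [integral_congr_ae (ae_of_all _ hring), integral_sub hdiag hcross,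
    integral_add (hfg.comp_snd μ) (hfg.comp_fst μ), integral_add (hf.mul_prod hg) (hg.mul_prod hf),
    integral_fun_snd (fun x => f x * g x), integral_fun_fst (fun x => f x * g x),
    integral_prod_mul, integral_prod_mul] at hpos
  simp only [probReal_univ, one_smul] at hpos
  linarith

theorem integral_pow_mul_integral_pow_le [IsProbabilityMeasure ν]
    (hmom : ∀ k : ℕ, Integrable (fun x => x ^ k) ν) {a b : ℕ} (ha : Even a) (hb : Even b) :
    (∫ x, x ^ a ∂ν) * ∫ x, x ^ b ∂ν ≤ ∫ x, x ^ (a + b) ∂ν := by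
  have hmono : Monovary (fun x : ℝ => x ^ a) (fun x => x ^ b) := fun x y hxy => by
    dsimp only at hxy ⊢
    rw [← hb.pow_abs x, ← hb.pow_abs y] at hxy
    rw [← ha.pow_abs x, ← ha.pow_abs y]
    exact pow_le_pow_left₀ (abs_nonneg _) (lt_of_pow_lt_pow_left₀ b (abs_nonneg _) hxy).le a
  simp_rw [pow_add]
  exact integral_mul_integral_le_integral_mul_of_monovary (hmom a) (hmom b)
    (by simpa only [pow_add] using hmom (a + b)) hmono

theorem prod_integral_pow_le_integral_pow_sum [IsProbabilityMeasure ν] {α : Type*}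
    (hν : ν.map (fun x => -x) = ν) (hmom : ∀ k : ℕ, Integrable (fun x => x ^ k) ν)
    (s : Finset α) (e : α → ℕ) :
    ∏ t ∈ s, ∫ x, x ^ e t ∂ν ≤ ∫ x, x ^ (∑ t ∈ s, e t) ∂ν := by
  classical
  by_cases hodd : ∃ t ∈ s, Odd (e t)
  · obtain ⟨t, ht, hodd⟩ := hodd
    rw [prod_eq_zero ht (integral_pow_eq_zero_of_map_neg_eq hν hodd)]
    exact integral_pow_nonneg_of_map_neg_eq hν _
  push Not at hodd
  induction s using Finset.induction_on with
  | empty => simp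
  | insert c s hc ih =>
    have heven (t) (ht : t ∈ insert c s) : Even (e t) := Nat.not_odd_iff_even.mp (hodd t ht)
    rw [prod_insert hc, sum_insert hc]
    calc (∫ x, x ^ e c ∂ν) * ∏ t ∈ s, ∫ x, x ^ e t ∂ν
        ≤ (∫ x, x ^ e c ∂ν) * ∫ x, x ^ (∑ t ∈ s, e t) ∂ν :=
          mul_le_mul_of_nonneg_left (ih fun t ht => hodd t (mem_insert_of_mem ht))
            (integral_pow_nonneg_of_map_neg_eq hν _)
      _ ≤ ∫ x, x ^ (e c + ∑ t ∈ s, e t) ∂ν :=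
          integral_pow_mul_integral_pow_le hmom (heven c (mem_insert_self c s))
            (even_sum e fun t ht => heven t (mem_insert_of_mem ht))

end Moments

theorem Fintype.prod_comp_eq_prod_pow_card {T κ M : Type*} [Fintype T] [Fintype κ]
    [DecidableEq κ] [CommMonoid M] (f : κ → M) (g : T → κ) :
    ∏ t, f (g t) = ∏ w, f w ^ #{t | g t = w} := by
  simp_rw [← Finset.prod_fiberwise' univ g f, prod_const]

theorem Fintype.sum_comp_le_sum_of_injective {α β M : Type*} [Fintype α] [Fintype β]
    [AddCommMonoid M] [PartialOrder M] [IsOrderedAddMonoid M] {e : α → β}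
    (he : Function.Injective e) (f : β → M) (hf : ∀ b, 0 ≤ f b) :
    ∑ a, f (e a) ≤ ∑ b, f b := by
  classical
  rw [← sum_image he.injOn]
  exact sum_le_univ_sum_of_nonneg hf

theorem ProbabilityTheory.iIndepFun.integrable_fun_prod {Ω κ : Type*} [MeasurableSpace Ω]
    {μ : Measure Ω} [Fintype κ] {Z : κ → Ω → ℝ} (hZ : iIndepFun Z μ)
    (hmeas : ∀ i, Measurable (Z i)) (hint : ∀ i, Integrable (Z i) μ) :
    Integrable (fun ω => ∏ i, Z i ω) μ := by
  refine ⟨Finset.aestronglyMeasurable_fun_prod _ fun i _ => (hmeas i).aestronglyMeasurable, ?_⟩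
  have hnorm : iIndepFun (fun i ω => ‖Z i ω‖ₑ) μ :=
    hZ.comp (fun _ x => ‖x‖ₑ) fun _ => measurable_enorm
  simp only [HasFiniteIntegral, enorm_eq_nnnorm, nnnorm_prod, ENNReal.ofNNReal_finsetProd]
  simp only [← enorm_eq_nnnorm]
  rw [lintegral_prod_eq_prod_lintegral_of_indepFun _ _ hnorm fun i => (hmeas i).enorm]
  exact ENNReal.prod_lt_top fun i _ => (hint i).2

theorem integrable_pow_of_map_eq {Ω : Type*} [MeasurableSpace Ω] {μ : Measure Ω} {ν : Measure ℝ}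
    {Z : Ω → ℝ} (hZ : Measurable Z) (hlaw : μ.map Z = ν) {k : ℕ}
    (hk : Integrable (fun x => x ^ k) ν) : Integrable (fun ω => Z ω ^ k) μ :=
  (integrable_map_measure (continuous_pow k).aestronglyMeasurable hZ.aemeasurable).mp
    (hlaw ▸ hk)

section WordMoment

variable (ν : Measure ℝ) {T κ κ' : Type*} [Fintype T] [Fintype κ] [DecidableEq κ]
  [Fintype κ'] [DecidableEq κ']

noncomputable def wordMoment (g : T → κ) : ℝ :=
  ∏ w, ∫ x, x ^ #{t | g t = w} ∂ν

variable {ν}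

theorem integral_prod_comp_eq_wordMoment {Ω : Type*} [MeasurableSpace Ω] {μ : Measure Ω}
    {Z : κ → Ω → ℝ} (hZ : iIndepFun Z μ) (hmeas : ∀ w, Measurable (Z w))
    (hlaw : ∀ w, μ.map (Z w) = ν) (hmom : ∀ k : ℕ, Integrable (fun x => x ^ k) ν) (g : T → κ) :
    Integrable (fun ω => ∏ t, Z (g t) ω) μ ∧ ∫ ω, ∏ t, Z (g t) ω ∂μ = wordMoment ν g := by
  have hpow (ω : Ω) : ∏ t, Z (g t) ω = ∏ w, Z w ω ^ #{t | g t = w} :=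
    Fintype.prod_comp_eq_prod_pow_card (fun w => Z w ω) g
  simp_rw [hpow]
  refine ⟨(hZ.comp _ fun w => measurable_id.pow_const _).integrable_fun_prod
    (fun w => (hmeas w).pow_const _) fun w => integrable_pow_of_map_eq (hmeas w) (hlaw w) (hmom _),
    ?_⟩
  rw [hZ.integral_fun_prod_comp (f := fun w x => x ^ #{t | g t = w})
    (fun w => (hmeas w).aemeasurable) fun w => by fun_prop]
  refine prod_congr rfl fun w _ => ?_
  rw [← hlaw w, integral_map (hmeas w).aemeasurable (by fun_prop)]

theorem wordMoment_nonneg (hν : ν.map (fun x => -x) = ν) (g : T → κ) : 0 ≤ wordMoment ν g :=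
  prod_nonneg fun _ _ => integral_pow_nonneg_of_map_neg_eq hν _

theorem wordMoment_le_wordMoment_comp [IsProbabilityMeasure ν] (hν : ν.map (fun x => -x) = ν)
    (hmom : ∀ k : ℕ, Integrable (fun x => x ^ k) ν) (g : T → κ) (φ : κ → κ') :
    wordMoment ν g ≤ wordMoment ν (φ ∘ g) := by
  have hcard (q : κ') : #{t | φ (g t) = q} = ∑ w with φ w = q, #{t | g t = w} := by
    rw [sum_card_fiberwise_eq_card_filter]
    simp only [mem_filter, mem_univ, true_and]
  calc wordMoment ν g = ∏ q, ∏ w with φ w = q, ∫ x, x ^ #{t | g t = w} ∂ν :=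
        (prod_fiberwise univ φ _).symm
    _ ≤ wordMoment ν (φ ∘ g) := by
        refine prod_le_prod (fun q _ => prod_nonneg fun w _ =>
          integral_pow_nonneg_of_map_neg_eq hν _) fun q _ => ?_
        rw [Function.comp_def, hcard q]
        exact prod_integral_pow_le_integral_pow_sum hν hmom _ _

end WordMoment

section Trace

variable {R ι : Type*} [CommSemiring R] [Fintype ι] [DecidableEq ι]

theorem Matrix.pow_succ_apply_eq_sum_prod (P : Matrix ι ι R) (m : ℕ) (i j : ι) :
    (P ^ (m + 1)) i j = ∑ e : Fin m → ι,
      ∏ k, P ((Fin.cons i e : Fin (m + 1) → ι) k) ((Fin.snoc e j : Fin (m + 1) → ι) k) := by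
  induction m generalizing j with
  | zero => simp [Fin.snoc]
  | succ m ih =>
    rw [pow_succ, mul_apply, ← (Fin.snocEquiv fun _ => ι).sum_comp, Fintype.sum_prod_type]
    refine sum_congr rfl fun x _ => ?_
    simp [ih, sum_mul, Fin.prod_univ_castSucc, Fin.cons_snoc_eq_snoc_cons, Fin.snocEquiv]

theorem Fin.cons_apply_add_one {α : Type*} {m : ℕ} (a : α) (e : Fin m → α) (k : Fin (m + 1)) :
    (Fin.cons a e : Fin (m + 1) → α) (k + 1) = (Fin.snoc e a : Fin (m + 1) → α) k := by
  induction k using Fin.lastCases with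
  | last => simp
  | cast k => simp [Fin.coeSucc_eq_succ]

theorem Matrix.trace_pow_succ_eq_sum_prod (P : Matrix ι ι R) (m : ℕ) :
    (P ^ (m + 1)).trace = ∑ v : Fin (m + 1) → ι, ∏ k, P (v k) (v (k + 1)) := by
  rw [← (Fin.consEquiv fun _ => ι).sum_comp, Fintype.sum_prod_type, trace]
  simp [pow_succ_apply_eq_sum_prod, Fin.consEquiv, Fin.cons_apply_add_one]

theorem Matrix.trace_transpose_mul_self_pow_succ {κ : Type*} [Fintype κ] (Y : Matrix κ ι R)
    (m : ℕ) : ((Yᵀ * Y) ^ (m + 1)).trace = ∑ d : Fin (m + 1) → ι, ∑ c : Fin (m + 1) → κ,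
      ∏ k, Y (c k) (d k) * Y (c k) (d (k + 1)) := by
  simp only [trace_pow_succ_eq_sum_prod, mul_apply, transpose_apply, prod_univ_sum,
    Fintype.piFinset_univ]

end Trace

/-- The entries of `Y` multiplied in the term of index `(c, d)` of
`trace_transpose_mul_self_pow_succ`. -/
def walkEntries {κ ι : Type*} {m : ℕ} (c : Fin (m + 1) → κ) (d : Fin (m + 1) → ι) :
    Fin (m + 1) ⊕ Fin (m + 1) → κ × ι :=
  Sum.elim (fun k => (c k, d k)) (fun k => (c k, d (k + 1)))

theorem walkEntries_comp_right {κ ι ι' : Type*} {m : ℕ} (c : Fin (m + 1) → κ)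
    (d : Fin (m + 1) → ι) (f : ι → ι') :
    walkEntries c (f ∘ d) = Prod.map id f ∘ walkEntries c d := by
  ext (k | k) <;> rfl

theorem integral_trace_transpose_mul_self_pow_succ {Ω κ ι E : Type*} [MeasurableSpace Ω]
    {μ : Measure Ω} {ν : Measure ℝ} [Fintype κ] [Fintype ι] [DecidableEq ι] [Fintype E]
    [DecidableEq E] {Z : E → Ω → ℝ} (hZ : iIndepFun Z μ) (hmeas : ∀ w, Measurable (Z w))
    (hlaw : ∀ w, μ.map (Z w) = ν) (hmom : ∀ k : ℕ, Integrable (fun x => x ^ k) ν)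
    (σ : κ × ι → E) (Y : Ω → Matrix κ ι ℝ) (hY : ∀ ω i j, Y ω i j = Z (σ (i, j)) ω) (m : ℕ) :
    ∫ ω, (((Y ω)ᵀ * Y ω) ^ (m + 1)).trace ∂μ
      = ∑ d : Fin (m + 1) → ι, ∑ c : Fin (m + 1) → κ, wordMoment ν (σ ∘ walkEntries c d) := by
  have hword (d : Fin (m + 1) → ι) (c : Fin (m + 1) → κ) (ω : Ω) :
      ∏ k, Y ω (c k) (d k) * Y ω (c k) (d (k + 1)) = ∏ t, Z ((σ ∘ walkEntries c d) t) ω := by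
    simp [Fintype.prod_sum_type, prod_mul_distrib, hY, walkEntries]
  have hterm (d : Fin (m + 1) → ι) (c : Fin (m + 1) → κ) :=
    integral_prod_comp_eq_wordMoment hZ hmeas hlaw hmom (σ ∘ walkEntries c d)
  simp_rw [trace_transpose_mul_self_pow_succ, hword]
  rw [integral_finsetSum _ fun d _ => integrable_finsetSum _ fun c _ => (hterm d c).1]
  simp_rw [integral_finsetSum _ fun c _ => (hterm _ c).1, (hterm _ _).2]

def sortedPair {α : Type*} [LinearOrder α] (a b : α) : {q : α × α // q.1 ≤ q.2} :=
  ⟨(min a b, max a b), min_le_max⟩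

theorem Matrix.IsSymm.apply_sortedPair {α R : Type*} [LinearOrder α] {A : Matrix α α R}
    (hA : A.IsSymm) (i j : α) : A (sortedPair i j).1.1 (sortedPair i j).1.2 = A i j := by
  rcases le_total i j with h | h
  · simp [sortedPair, h]
  · simp [sortedPair, h, hA.apply]

theorem trace_power_cov_le_trace_power_wigner_general
    {ΩX ΩM : Type*} [MeasurableSpace ΩX] [MeasurableSpace ΩM]
    (μX : Measure ΩX)
    (μM : Measure ΩM)
    (ν : Measure ℝ) (hν : IsProbabilityMeasure ν)
    -- the common law is symmetric
    (hνsymm : ν.map (fun x => -x) = ν)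
    -- all moments of the common law are finite
    (hνmom : ∀ k : ℕ, Integrable (fun x => x ^ k) ν)
    (n p : ℕ) (hpn : p ≤ n)
    (X : ΩX → Matrix (Fin n) (Fin p) ℝ)
    (hXmeas : ∀ i j, Measurable fun ω => X ω i j)
    -- the entries of `X` are independent with common law `ν`
    (hXlaw : ∀ i j, Measure.map (fun ω => X ω i j) μX = ν)
    (hXindep : iIndepFun
      (fun (ij : Fin n × Fin p) ω => X ω ij.1 ij.2) μX)
    (M : ΩM → Matrix (Fin n) (Fin n) ℝ)
    -- `M` is symmetric: `y_{ji} = y_{ij}`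
    (hMsymm : ∀ ω, (M ω).IsSymm)
    (hMmeas : ∀ i j, Measurable fun ω => M ω i j)
    -- the entries of `M` on and above the diagonal are independent with common law `ν`
    (hMlaw : ∀ i j, Measure.map (fun ω => M ω i j) μM = ν)
    (hMindep : iIndepFun
      (fun (q : {q : Fin n × Fin n // q.1 ≤ q.2}) ω => M ω q.1.1 q.1.2) μM)
    (m : ℕ) (hm : 0 < m) :
    ∫ ω, (((X ω)ᵀ * X ω) ^ m).trace ∂ μX ≤ ∫ ω, ((M ω) ^ (2 * m)).trace ∂ μM := by
  obtain ⟨m, rfl⟩ := Nat.exists_eq_add_one_of_ne_zero hm.ne'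
  let σM (w : Fin n × Fin n) := sortedPair w.1 w.2
  have hX := integral_trace_transpose_mul_self_pow_succ hXindep (fun w => hXmeas w.1 w.2)
    (fun w => hXlaw w.1 w.2) hνmom id X (fun _ _ _ => rfl) m
  have hM := integral_trace_transpose_mul_self_pow_succ hMindep (fun q => hMmeas _ _)
    (fun q => hMlaw _ _) hνmom σM M (fun ω i j => ((hMsymm ω).apply_sortedPair i j).symm) m
  have hMpow (ω : ΩM) : M ω ^ (2 * (m + 1)) = ((M ω)ᵀ * M ω) ^ (m + 1) := by
    rw [pow_mul, sq, (hMsymm ω).eq]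
  simp_rw [hX, hMpow, hM]
  calc ∑ d : Fin (m + 1) → Fin p, ∑ c, wordMoment ν (id ∘ walkEntries c d)
      ≤ ∑ d : Fin (m + 1) → Fin p, ∑ c, wordMoment ν (σM ∘ walkEntries c (Fin.castLE hpn ∘ d)) :=
        sum_le_sum fun d _ => sum_le_sum fun c _ => by
          rw [walkEntries_comp_right]
          exact wordMoment_le_wordMoment_comp hνsymm hνmom (walkEntries c d)
            (σM ∘ Prod.map id (Fin.castLE hpn))
    _ ≤ ∑ d : Fin (m + 1) → Fin n, ∑ c, wordMoment ν (σM ∘ walkEntries c d) :=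
        Fintype.sum_comp_le_sum_of_injective (Fin.castLE_injective hpn).comp_left
          (fun d => ∑ c, wordMoment ν (σM ∘ walkEntries c d))
          fun d => sum_nonneg fun c _ => wordMoment_nonneg hνsymm _

/-- **Inequality (3.3)** of Soshnikov.  Let `x_{ij}` be i.i.d. real random variables
with a common symmetric law `ν` having all moments finite, `X` the `n×p` matrix with
entries `x_{ij}` (`p ≤ n`), and `A_p = Xᵀ X`.  Let `M_n` be an `n×n` real symmetric
Wigner matrix whose entries on and above the diagonal are i.i.d. with the same law `ν`.
Then `E[Trace A_p^m] ≤ E[Trace M_n^{2m}]` for every positive integer `m`. -/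
theorem trace_power_cov_le_trace_power_wigner
    {ΩX ΩM : Type*} [MeasurableSpace ΩX] [MeasurableSpace ΩM]
    (μX : Measure ΩX) (hμX : IsProbabilityMeasure μX)
    (μM : Measure ΩM) (hμM : IsProbabilityMeasure μM)
    (ν : Measure ℝ) (hν : IsProbabilityMeasure ν)
    -- the common law is symmetric
    (hνsymm : ν.map (fun x => -x) = ν)
    -- all moments of the common law are finite
    (hνmom : ∀ k : ℕ, Integrable (fun x => x ^ k) ν)
    (n p : ℕ) (hpn : p ≤ n)
    (X : ΩX → Matrix (Fin n) (Fin p) ℝ)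
    (hXmeas : ∀ i j, Measurable fun ω => X ω i j)
    -- the entries of `X` are independent with common law `ν`
    (hXlaw : ∀ i j, Measure.map (fun ω => X ω i j) μX = ν)
    (hXindep : iIndepFun
      (fun (ij : Fin n × Fin p) ω => X ω ij.1 ij.2) μX)
    (M : ΩM → Matrix (Fin n) (Fin n) ℝ)
    -- `M` is symmetric: `y_{ji} = y_{ij}`
    (hMsymm : ∀ ω, (M ω).IsSymm)
    (hMmeas : ∀ i j, Measurable fun ω => M ω i j)
    -- the entries of `M` on and above the diagonal are independent with common law `ν`
    (hMlaw : ∀ i j, Measure.map (fun ω => M ω i j) μM = ν)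
    (hMindep : iIndepFun
      (fun (q : {q : Fin n × Fin n // q.1 ≤ q.2}) ω => M ω q.1.1 q.1.2) μM)
    (m : ℕ) (hm : 0 < m) :
    ∫ ω, (((X ω)ᵀ * X ω) ^ m).trace ∂ μX ≤ ∫ ω, ((M ω) ^ (2 * m)).trace ∂ μM :=
  trace_power_cov_le_trace_power_wigner_general μX μM ν hν hνsymm hνmom n p hpn X hXmeas hXlaw
    hXindep M hMsymm hMmeas hMlaw hMindep m hm
end

section
/- Let y ≥ 1 and let z be a real number with 0 < z < 1/(√y + 1)². Then the series Σ_{m≥0} g_m(y)·z^m converges and its sum equals (−y·z + z + 1 − √(((y−1)·z − 1)² − 4z)) / (2z), where the expression under the square root is nonnegative for such z. -/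
open Finset

/-- The height after `t` steps of the walk encoded by the step sequence `s`
(`true` = up-step `+1`, `false` = down-step `−1`). -/
def dyckHeight (m : ℕ) (s : Fin (2 * m) → Bool) (t : ℕ) : ℤ :=
  ∑ u ∈ Finset.univ.filter (fun u : Fin (2 * m) => (u : ℕ) < t),
    (if s u then (1 : ℤ) else -1)

/-- `s` encodes a Dyck path of length `2m`: the walk `x(t) = dyckHeight m s t` satisfies
`x(0) = 0`, `x(t) ≥ 0` for all `0 ≤ t ≤ 2m`, `x(2m) = 0`, and `|x(t+1) − x(t)| = 1`. -/
def IsDyck (m : ℕ) (s : Fin (2 * m) → Bool) : Prop :=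
  (∀ t : ℕ, t ≤ 2 * m → 0 ≤ dyckHeight m s t) ∧ dyckHeight m s (2 * m) = 0

/-- `#(X)`: the number of up-steps at even times of the path encoded by `s`. -/
def upEven (m : ℕ) (s : Fin (2 * m) → Bool) : ℕ :=
  (Finset.univ.filter (fun u : Fin (2 * m) => (u : ℕ) % 2 = 0 ∧ s u = true)).card

/-- `#'(X)`: the number of up-steps at odd times of the path encoded by `s`. -/
def upOdd (m : ℕ) (s : Fin (2 * m) → Bool) : ℕ :=
  (Finset.univ.filter (fun u : Fin (2 * m) => (u : ℕ) % 2 = 1 ∧ s u = true)).card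

open Classical in
/-- `g_m(y) = Σ_{X ∈ Ω_m} y^{#(X)}`, the generating polynomial of Dyck paths of length
`2m` by the number of up-steps at even times; `g_0(y) = 1`. -/
noncomputable def dyckG (m : ℕ) (y : ℝ) : ℝ :=
  ∑ s : Fin (2 * m) → Bool, if IsDyck m s then y ^ upEven m s else 0

open Classical in
/-- `g'_m(y) = Σ_{X ∈ Ω_m} y^{#'(X)}`, the generating polynomial of Dyck paths of length
`2m` by the number of up-steps at odd times; `g'_0(y) = 1`. -/
noncomputable def dyckG' (m : ℕ) (y : ℝ) : ℝ :=
  ∑ s : Fin (2 * m) → Bool, if IsDyck m s then y ^ upOdd m s else 0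

/-!
Cutting a Dyck word at its first return to zero writes it uniquely as `U p D q` with `p`, `q`
Dyck words; the steps of `p` change the parity of their time, those of `q` keep it. Hence the
generating functions `A(z) = Σ g_m(y) zᵐ` and `B(z) = Σ g'_m(y) zᵐ` satisfy `A = 1 + y z B A` and `B = 1 + z A B`, so `z A² − (1 + z − y z) A + 1 = 0`. When the
discriminant is positive, the smaller root `A₀` and `B₀ = 1 / (1 − z A₀)` solve this system, and
by induction they bound all partial sums. So both series converge, and `Σ g_m(y) zᵐ`, a root of
the quadratic not exceeding `A₀`, equals `A₀`.
-/

open DyckStep DyckWord BinaryTree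

/-- The number of up-steps of `l` at even times, when `l` is read as starting at time `k`. -/
def countUpAtEven : ℕ → List DyckStep → ℕ
  | _, [] => 0
  | k, a :: l => (if Even k ∧ a = U then 1 else 0) + countUpAtEven (k + 1) l

theorem countUpAtEven_append (k : ℕ) (l r : List DyckStep) :
    countUpAtEven k (l ++ r) = countUpAtEven k l + countUpAtEven (k + l.length) r := by
  induction l generalizing k with
  | nil => simp [countUpAtEven]
  | cons a l ih => simp only [List.cons_append, countUpAtEven, ih, List.length_cons]; ring_nf

theorem countUpAtEven_congr {k k' : ℕ} (h : Even k ↔ Even k') (l : List DyckStep) :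
    countUpAtEven k l = countUpAtEven k' l := by
  induction l generalizing k k' with
  | nil => rfl
  | cons a l ih =>
    simp only [countUpAtEven, h, ih (by simp [Nat.even_add_one, h] : Even (k + 1) ↔ Even (k' + 1))]

theorem countUpAtEven_ofFn (k : ℕ) {n : ℕ} (f : Fin n → DyckStep) :
    countUpAtEven k (List.ofFn f) = #{i : Fin n | Even (k + i) ∧ f i = U} := by
  induction n generalizing k with
  | zero => simp [countUpAtEven]
  | succ n ih =>
    simp only [List.ofFn_succ, countUpAtEven, ih, Fin.card_filter_univ_succ', Fin.val_zero,
      add_zero, Fin.val_succ, add_assoc, add_comm 1]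

theorem countUpAtEven_nest_add (k : ℕ) (p q : DyckWord) :
    countUpAtEven k (p.nest + q).toList =
      (if Even k then 1 else 0) + countUpAtEven (k + 1) p.toList + countUpAtEven k q.toList := by
  have hq : countUpAtEven (k + (p.toList.length + 2)) q.toList = countUpAtEven k q.toList :=
    countUpAtEven_congr (by simp [← two_mul_semilength_eq_length, Nat.even_add]) _
  change countUpAtEven k ([U] ++ p.toList ++ [D] ++ q.toList) = _
  simp only [countUpAtEven_append, countUpAtEven, List.length_append, List.length_singleton]
  rw [show k + (1 + p.toList.length + 1) = k + (p.toList.length + 2) by ring, hq]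
  simp

section DyckPoly

variable {R : Type*} [CommSemiring R]

/-- Dyck words of semilength `n` are enumerated as binary trees; the root of a tree is the
first-return decomposition `U p D q` of its word. -/
def dyckPoly (k n : ℕ) (y : R) : R :=
  ∑ t ∈ treesOfNumNodesEq n, y ^ countUpAtEven k (ofTree t).toList

@[simp]
theorem dyckPoly_zero (k : ℕ) (y : R) : dyckPoly k 0 y = 1 := by
  simp [dyckPoly, ofTree, countUpAtEven]

theorem dyckPoly_congr {k k' : ℕ} (h : Even k ↔ Even k') (n : ℕ) (y : R) :
    dyckPoly k n y = dyckPoly k' n y := by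
  simp only [dyckPoly, countUpAtEven_congr h]

theorem dyckPoly_succ (k n : ℕ) (y : R) :
    dyckPoly k (n + 1) y = (if Even k then y else 1) *
      ∑ p ∈ antidiagonal n, dyckPoly (k + 1) p.1 y * dyckPoly k p.2 y := by
  rw [dyckPoly, treesOfNumNodesEq_succ, sum_biUnion, mul_sum]
  · refine sum_congr rfl fun p _ => ?_
    rw [sum_map, sum_product, dyckPoly, dyckPoly, sum_mul_sum, mul_sum]
    refine sum_congr rfl fun l _ => ?_
    rw [mul_sum]
    refine sum_congr rfl fun r _ => ?_
    change y ^ countUpAtEven k ((ofTree l).nest + ofTree r).toList = _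
    rw [countUpAtEven_nest_add, pow_add, pow_add]
    split_ifs <;> simp [mul_assoc]
  · simp_rw [Set.PairwiseDisjoint, Set.Pairwise, disjoint_left]
    aesop

end DyckPoly

def stepWord {n : ℕ} (s : Fin n → Bool) : List DyckStep :=
  List.ofFn fun i => if s i then U else D

theorem upEven_eq_countUpAtEven (m : ℕ) (s : Fin (2 * m) → Bool) :
    upEven m s = countUpAtEven 0 (stepWord s) := by
  rw [stepWord, countUpAtEven_ofFn, upEven]
  congr! 2 with i
  simp [Nat.even_iff]

theorem dyckHeight_eq_count_sub_count (m : ℕ) (s : Fin (2 * m) → Bool) (t : ℕ) :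
    dyckHeight m s t = ((stepWord s).take t).count U - ((stepWord s).take t).count D := by
  have sum_weights (l : List DyckStep) :
      (l.map fun a => if a = U then (1 : ℤ) else -1).sum = l.count U - l.count D := by
    induction l with
    | nil => simp
    | cons a l ih =>
      cases a <;>
        simp only [List.map_cons, List.sum_cons, ih, List.count_cons_self, List.count_cons_of_ne,
          ne_eq, reduceCtorEq, not_false_eq_true, ↓reduceIte, Nat.cast_add, Nat.cast_one] <;>
        ring
  rw [← sum_weights, List.map_take, stepWord, List.map_ofFn, dyckHeight, ← List.sum_take_ofFn]
  congr! 4 with u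
  cases h : s u <;> simp [h]

theorem isDyck_iff (m : ℕ) (s : Fin (2 * m) → Bool) :
    IsDyck m s ↔ (∀ i, ((stepWord s).take i).count D ≤ ((stepWord s).take i).count U) ∧
      (stepWord s).count U = (stepWord s).count D := by
  have hlen : (stepWord s).length = 2 * m := List.length_ofFn
  simp only [IsDyck, dyckHeight_eq_count_sub_count, sub_nonneg, sub_eq_zero, Nat.cast_le,
    Nat.cast_inj, List.take_of_length_le hlen.le]
  refine and_congr_left' ⟨fun h i => ?_, fun h i _ => h i⟩
  rcases le_total i (2 * m) with hi | hi
  · exact h i hi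
  · simpa [List.take_of_length_le (hlen ▸ hi), List.take_of_length_le hlen.le] using h _ le_rfl

def IsDyck.toDyckWord {m : ℕ} {s : Fin (2 * m) → Bool} (h : IsDyck m s) : DyckWord :=
  ⟨stepWord s, ((isDyck_iff m s).1 h).2, ((isDyck_iff m s).1 h).1⟩

theorem IsDyck.semilength_toDyckWord {m : ℕ} {s : Fin (2 * m) → Bool} (h : IsDyck m s) :
    h.toDyckWord.semilength = m := by
  have := h.toDyckWord.two_mul_semilength_eq_length
  rw [show h.toDyckWord.toList = stepWord s from rfl, stepWord, List.length_ofFn] at this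
  omega

theorem exists_stepWord_eq {m : ℕ} (p : DyckWord) (hp : p.semilength = m) :
    ∃ s : Fin (2 * m) → Bool, stepWord s = p.toList := by
  have hlen : p.toList.length = 2 * m := by rw [← hp, two_mul_semilength_eq_length]
  refine ⟨fun i => decide (p.toList[(i : ℕ)]'(hlen.symm ▸ i.2) = U), ?_⟩
  refine List.ext_getElem (by simp [stepWord, hlen]) fun i _ _ => ?_
  rcases h : p.toList[i] <;> simp [stepWord, h]

theorem dyckG_eq_dyckPoly (m : ℕ) (y : ℝ) : dyckG m y = dyckPoly 0 m y := by
  classical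
  rw [dyckG, ← sum_filter, dyckPoly]
  refine sum_bij (fun s hs => (mem_filter.1 hs).2.toDyckWord.toTree) ?_ ?_ ?_ ?_
  · intro s hs
    simp [IsDyck.semilength_toDyckWord]
  · intro s₁ hs₁ s₂ hs₂ h
    have hw := congrArg DyckWord.toList (equivTree.injective h)
    funext i
    have := congrFun (List.ofFn_injective hw) i
    cases h₁ : s₁ i <;> cases h₂ : s₂ i <;> simp_all
  · intro t ht
    have hm : (ofTree t).semilength = m := by
      rw [← numNodes_toTree, toTree_ofTree, ← mem_treesOfNumNodesEq.1 ht]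
    obtain ⟨s, hs⟩ := exists_stepWord_eq (ofTree t) hm
    have hdyck : IsDyck m s := by
      rw [isDyck_iff, hs]
      exact ⟨(ofTree t).count_D_le_count_U, (ofTree t).count_U_eq_count_D⟩
    refine ⟨s, mem_filter.2 ⟨mem_univ s, hdyck⟩, ?_⟩
    rw [show hdyck.toDyckWord = ofTree t from DyckWord.ext hs, toTree_ofTree]
  · intro s hs
    rw [ofTree_toTree, upEven_eq_countUpAtEven]
    rfl

theorem sum_range_sum_antidiagonal_le {R : Type*} [CommSemiring R] [PartialOrder R]
    [IsOrderedRing R] {f g : ℕ → R} (hf : ∀ n, 0 ≤ f n) (hg : ∀ n, 0 ≤ g n)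
    (N : ℕ) : ∑ n ∈ range N, ∑ p ∈ antidiagonal n, f p.1 * g p.2 ≤
      (∑ i ∈ range N, f i) * ∑ j ∈ range N, g j := by
  simp_rw [Nat.sum_antidiagonal_eq_sum_range_succ_mk]
  rw [sum_comm' (t' := range N) (s' := fun k => Ico k N)
    (by intro n k; simp only [mem_range, mem_Ico]; omega), sum_mul]
  refine sum_le_sum fun k _ => ?_
  rw [← mul_sum, sum_Ico_eq_sum_range]
  simp_rw [add_tsub_cancel_left]
  exact mul_le_mul_of_nonneg_left
    (sum_le_sum_of_subset_of_nonneg (range_mono (Nat.sub_le _ _)) fun _ _ _ => hg _) (hf k)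

theorem sum_antidiagonal_mul_mul_pow {R : Type*} [CommSemiring R] (f g : ℕ → R) (z : R) (n : ℕ) :
    (∑ p ∈ antidiagonal n, f p.1 * g p.2) * z ^ n =
      ∑ p ∈ antidiagonal n, (f p.1 * z ^ p.1) * (g p.2 * z ^ p.2) := by
  rw [sum_mul]
  refine sum_congr rfl fun p hp => ?_
  rw [← mem_antidiagonal.1 hp, pow_add]
  ring

/-- `u` and `v` are the coefficients of power series `U`, `V` with nonnegative coefficients
satisfying `U = 1 + α V U` and `V = 1 + β U V`. -/
structure CoupledCatalan (α β : ℝ) (u v : ℕ → ℝ) : Prop where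
  nonneg_left : ∀ n, 0 ≤ u n
  nonneg_right : ∀ n, 0 ≤ v n
  left_zero : u 0 = 1
  right_zero : v 0 = 1
  left_succ : ∀ n, u (n + 1) = α * ∑ p ∈ antidiagonal n, v p.1 * u p.2
  right_succ : ∀ n, v (n + 1) = β * ∑ p ∈ antidiagonal n, u p.1 * v p.2

namespace CoupledCatalan

variable {α β : ℝ} {u v : ℕ → ℝ}

theorem sum_range_le (h : CoupledCatalan α β u v) (hα : 0 ≤ α) (hβ : 0 ≤ β) {A B : ℝ}
    (hA : 0 ≤ A) (hB : 0 ≤ B) (hA_fix : 1 + α * (B * A) ≤ A) (hB_fix : 1 + β * (A * B) ≤ B)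
    (N : ℕ) : ∑ n ∈ range N, u n ≤ A ∧ ∑ n ∈ range N, v n ≤ B := by
  induction N with
  | zero => simpa using ⟨hA, hB⟩
  | succ N ih =>
    have hU := sum_nonneg fun n (_ : n ∈ range N) => h.nonneg_left n
    have hV := sum_nonneg fun n (_ : n ∈ range N) => h.nonneg_right n
    have hVU := (sum_range_sum_antidiagonal_le h.nonneg_right h.nonneg_left N).trans
      (mul_le_mul ih.2 ih.1 hU hB)
    have hUV := (sum_range_sum_antidiagonal_le h.nonneg_left h.nonneg_right N).trans
      (mul_le_mul ih.1 ih.2 hV hA)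
    rw [sum_range_succ', sum_range_succ', h.left_zero, h.right_zero]
    simp_rw [h.left_succ, h.right_succ, ← mul_sum]
    exact ⟨by linarith [mul_le_mul_of_nonneg_left hVU hα],
      by linarith [mul_le_mul_of_nonneg_left hUV hβ]⟩

theorem quadratic_tsum_eq_zero (h : CoupledCatalan α β u v) (hu : Summable u) (hv : Summable v) :
    β * (∑' n, u n) ^ 2 - (1 + β - α) * ∑' n, u n + 1 = 0 := by
  have hvu := hv.tsum_mul_tsum_eq_tsum_sum_antidiagonal hu
    (hv.mul_of_nonneg hu h.nonneg_right h.nonneg_left)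
  have huv := hu.tsum_mul_tsum_eq_tsum_sum_antidiagonal hv
    (hu.mul_of_nonneg hv h.nonneg_left h.nonneg_right)
  have hS : ∑' n, u n = 1 + α * ((∑' n, v n) * ∑' n, u n) := by
    rw [hvu, hu.tsum_eq_zero_add, h.left_zero, ← tsum_mul_left]
    simp_rw [h.left_succ]
  have hT : ∑' n, v n = 1 + β * ((∑' n, u n) * ∑' n, v n) := by
    rw [huv, hv.tsum_eq_zero_add, h.right_zero, ← tsum_mul_left]
    simp_rw [h.right_succ]
  linear_combination (β * ∑' n, u n - 1) * hS - α * (∑' n, u n) * hT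

theorem hasSum_of_smaller_root (h : CoupledCatalan α β u v) (hα : 0 ≤ α) (hβ : 0 ≤ β) {A : ℝ}
    (hA : 0 ≤ A) (hβA : β * A < 1) (hroot : β * A ^ 2 - (1 + β - α) * A + 1 = 0)
    (hsmaller : 2 * β * A < 1 + β - α) : HasSum u A := by
  set B := (1 - β * A)⁻¹
  have hB : (1 - β * A) * B = 1 := mul_inv_cancel₀ (by linarith)
  have hA_fix : 1 + α * (B * A) = A := by linear_combination (A - 1) * hB + B * hroot
  have hB_fix : 1 + β * (A * B) = B := by linear_combination -hB
  have bounds := h.sum_range_le hα hβ hA (inv_nonneg.2 (by linarith)) hA_fix.le hB_fix.le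
  have hu : Summable u := summable_of_sum_range_le h.nonneg_left fun N => (bounds N).1
  have hv : Summable v := summable_of_sum_range_le h.nonneg_right fun N => (bounds N).2
  have hle : ∑' n, u n ≤ A := Real.tsum_le_of_sum_range_le h.nonneg_left fun N => (bounds N).1
  -- `∑' n, u n` and `A` are roots of the same quadratic, and `∑' n, u n ≤ A` lies below its vertex.
  have hfactor : (∑' n, u n - A) * (β * (∑' n, u n + A) - (1 + β - α)) = 0 := by
    linear_combination h.quadratic_tsum_eq_zero hu hv - hroot
  have hneg : β * (∑' n, u n + A) - (1 + β - α) < 0 := by nlinarith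
  have heq : ∑' n, u n = A := by
    linarith [(mul_eq_zero.1 hfactor).resolve_right hneg.ne]
  exact heq ▸ hu.hasSum

theorem hasSum_of_discrim_pos (h : CoupledCatalan α β u v) (hβ : 0 < β) (hβα : β ≤ α)
    (hc : 0 < 1 + β - α) (hD : 0 < (1 + β - α) ^ 2 - 4 * β) :
    HasSum u ((1 + β - α - √((1 + β - α) ^ 2 - 4 * β)) / (2 * β)) := by
  set c := 1 + β - α
  set s := √(c ^ 2 - 4 * β)
  have hs : 0 < s := Real.sqrt_pos.2 hD
  have hs_sq : s ^ 2 = c ^ 2 - 4 * β := Real.sq_sqrt hD.le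
  have hsc : s < c := by nlinarith
  have hA : 2 * β * ((c - s) / (2 * β)) = c - s := by field_simp
  refine h.hasSum_of_smaller_root (by linarith) hβ.le (by positivity) (by linarith) ?_ (by linarith)
  have : 4 * β * (β * ((c - s) / (2 * β)) ^ 2 - c * ((c - s) / (2 * β)) + 1) = 0 := by
    linear_combination (2 * β * ((c - s) / (2 * β)) + (c - s) - 2 * c) * hA + hs_sq
  simpa [hβ.ne'] using this

end CoupledCatalan

theorem coupledCatalan_dyckG {y z : ℝ} (hy : 0 ≤ y) (hz : 0 ≤ z) :
    CoupledCatalan (y * z) z (fun n => dyckG n y * z ^ n) (fun n => dyckPoly 1 n y * z ^ n) := by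
  have hpoly (k n : ℕ) : 0 ≤ dyckPoly k n y := sum_nonneg fun _ _ => pow_nonneg hy _
  simp_rw [dyckG_eq_dyckPoly]
  refine ⟨fun n => mul_nonneg (hpoly 0 n) (pow_nonneg hz n),
    fun n => mul_nonneg (hpoly 1 n) (pow_nonneg hz n), by simp, by simp, fun n => ?_, fun n => ?_⟩
  · rw [dyckPoly_succ, ← sum_antidiagonal_mul_mul_pow (dyckPoly 1 · y) (dyckPoly 0 · y)]
    simp only [Even.zero, if_true, zero_add]
    ring
  · have h2 : dyckPoly 2 = dyckPoly (R := ℝ) 0 := funext₂ (dyckPoly_congr (by decide))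
    rw [dyckPoly_succ, ← sum_antidiagonal_mul_mul_pow (dyckPoly 0 · y) (dyckPoly 1 · y)]
    simp only [Nat.not_even_one, if_false, one_mul, Nat.reduceAdd, h2]
    ring

/-- **Formula (4.4)** of Soshnikov.  For `y ≥ 1` and `0 < z < 1/(√y+1)²`, the series
`Σ_{m≥0} g_m(y) z^m` converges, the expression `((y−1)z−1)² − 4z` is nonnegative, and
the sum equals `(−yz + z + 1 − √(((y−1)z−1)² − 4z)) / (2z)`. -/
theorem dyckG_generating_function (y z : ℝ) (hy : 1 ≤ y)
    (hz0 : 0 < z) (hz1 : z < 1 / (Real.sqrt y + 1) ^ 2) :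
    0 ≤ ((y - 1) * z - 1) ^ 2 - 4 * z ∧
      HasSum (fun m => dyckG m y * z ^ m)
        ((-(y * z) + z + 1 - Real.sqrt (((y - 1) * z - 1) ^ 2 - 4 * z)) / (2 * z)) := by
  have hsqrt_sq : √y ^ 2 = y := Real.sq_sqrt (by linarith)
  have hsqrt : 0 ≤ √y := Real.sqrt_nonneg y
  have hz : z * (√y + 1) ^ 2 < 1 := by rwa [lt_div_iff₀ (by positivity)] at hz1
  have hc : 0 < 1 + z - y * z := by nlinarith
  have hsq : ((y - 1) * z - 1) ^ 2 = (1 + z - y * z) ^ 2 := by ring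
  have hD : 0 < (1 + z - y * z) ^ 2 - 4 * z := by
    have : (1 + z - y * z) ^ 2 - 4 * z = (1 - (√y - 1) ^ 2 * z) * (1 - (√y + 1) ^ 2 * z) := by
      linear_combination (2 * z - z ^ 2 * (y + √y ^ 2 - 2)) * hsqrt_sq
    rw [this]
    apply mul_pos <;> nlinarith
  refine ⟨hsq ▸ hD.le, ?_⟩
  rw [hsq, show -(y * z) + z + 1 = 1 + z - y * z by ring]
  exact (coupledCatalan_dyckG (by linarith) hz0.le).hasSum_of_discrim_pos hz0 (by nlinarith) hc hD
end
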